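/- arXiv:2405.07859 — 2 statements merged into one kernel-verified Lean document; each statement's English description precedes it below -/
import Mathlib

section
/- Let J be a C*-algebra, let ε > 0, and let f : [0,1] → ℂ be a continuous function with f(0) = 0. Then there exists δ > 0 such that for any pair of contractions a, e in J with a ≥ 0, if ‖a*e - e*a‖ ≤ δ then ‖f(a)*e - e*f(a)‖ ≤ ε. (Here f(a) denotes the continuous functional calculus applied to a.) -/
/-!
Approximate `f` uniformly on `[0,1]` by a polynomial `p`. For a contraction `a` the Leibniz rule
gives `‖[a ^ k, e]‖ ≤ k ‖[a, e]‖`, so `‖[p(a), e]‖` is bounded by a constant depending only on `p`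
times `‖[a, e]‖`; and since the spectrum of a positive contraction lies in `[0,1]`,
`‖f(a) - p(a)‖ ≤ sup_{[0,1]} |f - p|`. The non-unital case is reduced to the unitization, where
`f 0 = 0` makes `cfcₙ` agree with `cfc`.
-/

open Polynomial

section Commutator

variable {A : Type*} [SeminormedRing A]

theorem norm_mul_sub_mul_le_of_norm_sub_le {x y e : A} (he : ‖e‖ ≤ 1) :
    ‖x * e - e * x‖ ≤ 2 * ‖x - y‖ + ‖y * e - e * y‖ := by
  have hsplit : x * e - e * x = ((x - y) * e - e * (x - y)) + (y * e - e * y) := by noncomm_ring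
  have hxy : ‖(x - y) * e - e * (x - y)‖ ≤ 2 * ‖x - y‖ :=
    calc _ ≤ ‖x - y‖ * ‖e‖ + ‖e‖ * ‖x - y‖ :=
          (norm_sub_le _ _).trans (add_le_add (norm_mul_le _ _) (norm_mul_le _ _))
      _ ≤ ‖x - y‖ * 1 + 1 * ‖x - y‖ := by gcongr
      _ = 2 * ‖x - y‖ := by ring
  rw [hsplit]
  exact (norm_add_le _ _).trans (add_le_add_left hxy _)

theorem norm_pow_mul_sub_mul_pow_le {a : A} (ha : ‖a‖ ≤ 1) (e : A) :
    ∀ n : ℕ, ‖a ^ n * e - e * a ^ n‖ ≤ n * ‖a * e - e * a‖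
  | 0 => by simp
  | 1 => by simp
  | n + 2 => by
    -- `‖1‖ ≤ 1` may fail in a seminormed ring, so the recursion only uses positive powers.
    have hpow : ‖a ^ (n + 1)‖ ≤ 1 :=
      (norm_pow_le' a n.succ_pos).trans (pow_le_one₀ (norm_nonneg a) ha)
    have hsplit : a ^ (n + 2) * e - e * a ^ (n + 2)
        = a * (a ^ (n + 1) * e - e * a ^ (n + 1)) + (a * e - e * a) * a ^ (n + 1) := by
      rw [pow_succ' a (n + 1)]
      noncomm_ring
    calc ‖a ^ (n + 2) * e - e * a ^ (n + 2)‖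
        ≤ ‖a‖ * ‖a ^ (n + 1) * e - e * a ^ (n + 1)‖ + ‖a * e - e * a‖ * ‖a ^ (n + 1)‖ := by
          rw [hsplit]
          exact (norm_add_le _ _).trans (add_le_add (norm_mul_le _ _) (norm_mul_le _ _))
      _ ≤ 1 * ((n + 1 : ℕ) * ‖a * e - e * a‖) + ‖a * e - e * a‖ * 1 := by
          gcongr
          exact norm_pow_mul_sub_mul_pow_le ha e (n + 1)
      _ = (n + 2 : ℕ) * ‖a * e - e * a‖ := by push_cast; ring

theorem norm_aeval_mul_sub_mul_aeval_le {𝕜 : Type*} [NormedField 𝕜] [NormedAlgebra 𝕜 A]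
    (p : 𝕜[X]) {a : A} (ha : ‖a‖ ≤ 1) (e : A) :
    ‖aeval a p * e - e * aeval a p‖
      ≤ (∑ k ∈ Finset.range (p.natDegree + 1), ‖p.coeff k‖ * k) * ‖a * e - e * a‖ := by
  rw [aeval_eq_sum_range, Finset.sum_mul, Finset.mul_sum, ← Finset.sum_sub_distrib,
    Finset.sum_mul]
  refine (norm_sum_le _ _).trans (Finset.sum_le_sum fun k _ => ?_)
  rw [smul_mul_assoc, mul_smul_comm, ← smul_sub, mul_assoc]
  exact (norm_smul_le _ _).trans (by gcongr; exact norm_pow_mul_sub_mul_pow_le ha e k)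

end Commutator

theorem exists_complex_polynomial_near_of_continuousOn (a b : ℝ) (f : ℝ → ℂ)
    (hf : ContinuousOn f (Set.Icc a b)) {ε : ℝ} (hε : 0 < ε) :
    ∃ p : ℂ[X], ∀ x ∈ Set.Icc a b, ‖p.eval (x : ℂ) - f x‖ < ε := by
  obtain ⟨p, hp⟩ := exists_polynomial_near_of_continuousOn a b (fun x => (f x).re)
    (Complex.continuous_re.comp_continuousOn hf) (ε / 2) (half_pos hε)
  obtain ⟨q, hq⟩ := exists_polynomial_near_of_continuousOn a b (fun x => (f x).im)
    (Complex.continuous_im.comp_continuousOn hf) (ε / 2) (half_pos hε)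
  refine ⟨p.map Complex.ofRealHom + C Complex.I * q.map Complex.ofRealHom, fun x hx => ?_⟩
  have heval (r : ℝ[X]) : (r.map Complex.ofRealHom).eval (x : ℂ) = r.eval x := by
    rw [eval_map, ← Complex.ofRealHom_eq_coe, eval₂_hom]
    rfl
  have hsplit : (p.map Complex.ofRealHom + C Complex.I * q.map Complex.ofRealHom).eval (x : ℂ)
      - f x = ((p.eval x - (f x).re : ℝ) : ℂ) + Complex.I * ((q.eval x - (f x).im : ℝ) : ℂ) := by
    conv_lhs => rw [← Complex.re_add_im (f x)]
    simp only [eval_add, eval_mul, eval_C, heval]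
    push_cast
    ring
  calc _ ≤ |p.eval x - (f x).re| + |q.eval x - (f x).im| := by
        rw [hsplit]
        refine (norm_add_le _ _).trans_eq ?_
        rw [norm_mul, Complex.norm_I, one_mul, Complex.norm_real, Complex.norm_real,
          Real.norm_eq_abs, Real.norm_eq_abs]
    _ < ε / 2 + ε / 2 := add_lt_add (hp x hx) (hq x hx)
    _ = ε := add_halves ε

section CStarAlgebra

variable {A : Type*} [CStarAlgebra A] [PartialOrder A] [StarOrderedRing A]

theorem eq_re_and_re_mem_Icc_of_mem_spectrum {a : A} (ha₀ : 0 ≤ a) (ha₁ : ‖a‖ ≤ 1) {z : ℂ}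
    (hz : z ∈ spectrum ℂ a) : z = z.re ∧ z.re ∈ Set.Icc (0 : ℝ) 1 := by
  have hz_eq : z = z.re := (IsSelfAdjoint.of_nonneg ha₀).mem_spectrum_eq_re hz
  have hre : z.re ∈ spectrum ℝ a := by
    rw [← spectrum.algebraMap_mem_iff ℂ, Complex.coe_algebraMap, ← hz_eq]
    exact hz
  have ha_le : a ≤ algebraMap ℝ A 1 := by
    rw [map_one]
    exact (CStarAlgebra.norm_le_one_iff_of_nonneg a ha₀).mp ha₁
  rw [le_algebraMap_iff_spectrum_le (IsSelfAdjoint.of_nonneg ha₀)] at ha_le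
  exact ⟨hz_eq, spectrum_nonneg_of_nonneg ha₀ hre, ha_le _ hre⟩

theorem norm_cfc_re_sub_aeval_le {a : A} (ha₀ : 0 ≤ a) (ha₁ : ‖a‖ ≤ 1) {f : ℝ → ℂ}
    (hf : ContinuousOn f (Set.Icc 0 1)) (p : ℂ[X]) {η : ℝ} (hη : 0 ≤ η)
    (hp : ∀ x ∈ Set.Icc (0 : ℝ) 1, ‖p.eval (x : ℂ) - f x‖ ≤ η) :
    ‖cfc (fun z : ℂ => f z.re) a - aeval a p‖ ≤ η := by
  have hspec := fun z (hz : z ∈ spectrum ℂ a) => eq_re_and_re_mem_Icc_of_mem_spectrum ha₀ ha₁ hz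
  have hcont : ContinuousOn (fun z : ℂ => f z.re) (spectrum ℂ a) :=
    hf.comp Complex.continuous_re.continuousOn fun z hz => (hspec z hz).2
  rw [← cfc_polynomial p a, ← cfc_sub _ _ a hcont]
  refine norm_cfc_le hη fun z hz => ?_
  obtain ⟨hz_eq, hz_mem⟩ := hspec z hz
  rw [norm_sub_rev, hz_eq, Complex.ofReal_re]
  exact hp z.re hz_mem

theorem exists_pos_forall_norm_cfc_re_mul_sub_mul_cfc_re_le {ε : ℝ} (hε : 0 < ε) {f : ℝ → ℂ}
    (hf : ContinuousOn f (Set.Icc 0 1)) :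
    ∃ δ > 0, ∀ a e : A, 0 ≤ a → ‖a‖ ≤ 1 → ‖e‖ ≤ 1 → ‖a * e - e * a‖ ≤ δ →
      ‖cfc (fun z : ℂ => f z.re) a * e - e * cfc (fun z : ℂ => f z.re) a‖ ≤ ε := by
  obtain ⟨p, hp⟩ :=
    exists_complex_polynomial_near_of_continuousOn 0 1 f hf (by positivity : 0 < ε / 4)
  set C := ∑ k ∈ Finset.range (p.natDegree + 1), ‖p.coeff k‖ * k
  have hC : 0 ≤ C := by positivity
  refine ⟨ε / (2 * (C + 1)), by positivity, fun a e ha₀ ha₁ he hae => ?_⟩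
  have happrox : ‖cfc (fun z : ℂ => f z.re) a - aeval a p‖ ≤ ε / 4 :=
    norm_cfc_re_sub_aeval_le ha₀ ha₁ hf p (by positivity) fun x hx => (hp x hx).le
  have hpoly : C * ‖a * e - e * a‖ ≤ ε / 2 :=
    calc C * ‖a * e - e * a‖ ≤ (C + 1) * (ε / (2 * (C + 1))) := by gcongr; linarith
      _ = ε / 2 := by field_simp
  calc _ ≤ 2 * (ε / 4) + C * ‖a * e - e * a‖ :=
        (norm_mul_sub_mul_le_of_norm_sub_le he).trans
          (add_le_add (by gcongr) (norm_aeval_mul_sub_mul_aeval_le p ha₁ e))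
    _ ≤ ε := by linarith

end CStarAlgebra

/-- Arveson's Lemma 1.1: for a C*-algebra `J`, `ε > 0` and a continuous
function `f : [0,1] → ℂ` with `f 0 = 0`, there is `δ > 0` such that for any pair of
contractions `a e : J` with `a ≥ 0`, if `‖a * e - e * a‖ ≤ δ` then
`‖f(a) * e - e * f(a)‖ ≤ ε`, where `f(a)` is given by the (non-unital) continuous
functional calculus. -/
theorem stmt0 (J : Type*) [NonUnitalCStarAlgebra J] [PartialOrder J] [StarOrderedRing J]
    (ε : ℝ) (hε : 0 < ε) (f : ℝ → ℂ) (hf : ContinuousOn f (Set.Icc (0 : ℝ) 1))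
    (hf0 : f 0 = 0) :
    ∃ δ > 0, ∀ a e : J, 0 ≤ a → ‖a‖ ≤ 1 → ‖e‖ ≤ 1 →
      ‖a * e - e * a‖ ≤ δ →
      ‖cfcₙ (fun z : ℂ => f z.re) a * e - e * cfcₙ (fun z : ℂ => f z.re) a‖ ≤ ε := by
  obtain ⟨δ, hδ, hunital⟩ :=
    exists_pos_forall_norm_cfc_re_mul_sub_mul_cfc_re_le (A := Unitization ℂ J) hε hf
  refine ⟨δ, hδ, fun a e ha₀ ha₁ he hae => ?_⟩
  have hcfc : ((cfcₙ (fun z : ℂ => f z.re) a : J) : Unitization ℂ J)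
      = cfc (fun z : ℂ => f z.re) (a : Unitization ℂ J) :=
    Unitization.complex_cfcₙ_eq_cfc_inr a _ (by simpa using hf0)
  rw [← Unitization.norm_inr (𝕜 := ℂ)] at ha₁ he hae ⊢
  push_cast at hae ⊢
  rw [hcfc]
  exact hunital a e (Unitization.inr_nonneg_iff.mpr ha₀) ha₁ he hae
end

section
/- Let J be a C*-algebra with a countable approximate unit (u_n) of positive contractions satisfying u_{n+1}u_n = u_n, set Δ₀ = √u₀ and Δ_n = √(u_n − u_{n−1}) for n ≥ 1, and let m ∈ M(J) be a contraction. Suppose ∑_{l=0}^{∞} ‖m·Δ_l − Δ_l·m‖ < ∞. Then for each n, the series ∑_{l=n}^{∞} Δ_l·m·Δ_l converges strictly in M(J) to an element φ_n(m), and m − φ_0(m) ∈ J; i.e., q_J(φ_0(m)) = q_J(m) in the corona algebra Q(J) = M(J)/J. -/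
/-!
Write `c_l = (m Δ_l - Δ_l m) Δ_l`, so that `Δ_l m Δ_l = m Δ_l² - c_l`. The relation
`u_{n+1} u_n = u_n` forces `u_n = u_{n+1} u_n u_{n+1} ≤ u_{n+1}² ≤ u_{n+1}`, so
`Δ_l² = u_l - u_{l-1}` and the partial sums of `∑ Δ_l²` telescope to `u_k`, which tends strictly
to `1`. Since `‖c_l‖ ≤ ‖m Δ_l - Δ_l m‖`, the series `∑ c_l` converges in norm, and its sum lies
in `J` because each `c_l` does and `J` is closed in `𝓜(J)`. Hence
`∑_{l ≤ k} Δ_l m Δ_l = m u_k - ∑_{l ≤ k} c_l` tends strictly to `φ₀(m) = m - ∑ c_l`, and the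
tails give `φ_n(m)`.
-/

open scoped MultiplierAlgebra
open Filter Topology Finset

theorem CStarRing.eq_zero_of_forall_mul_eq_zero {A : Type*} [NonUnitalNormedRing A] [StarRing A]
    [CStarRing A] {c : A} (h : ∀ z : A, z * c = 0) : c = 0 := by
  rw [← norm_eq_zero, ← mul_self_eq_zero, ← CStarRing.norm_star_mul_self, h, norm_zero]

namespace DoubleCentralizer

variable {A : Type*} [NonUnitalCStarAlgebra A]

theorem mul_coe (m : 𝓜(ℂ, A)) (a : A) : m * (a : 𝓜(ℂ, A)) = (m.fst a : 𝓜(ℂ, A)) := by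
  ext x
  · show m.fst (a * x) = m.fst a * x
    refine sub_eq_zero.mp (CStarRing.eq_zero_of_forall_mul_eq_zero fun z => ?_)
    rw [mul_sub, ← m.central, ← mul_assoc, m.central, mul_assoc, sub_self]
  · exact m.central x a

theorem coe_star (a : A) : ((star a : A) : 𝓜(ℂ, A)) = star (a : 𝓜(ℂ, A)) :=
  map_star (coeHom (𝕜 := ℂ) (A := A)) a

theorem coe_mul (a : A) (m : 𝓜(ℂ, A)) : (a : 𝓜(ℂ, A)) * m = (m.snd a : 𝓜(ℂ, A)) := by
  simpa [star_mul, ← coe_star, star_fst] using congr(star $(mul_coe (star m) (star a)))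

theorem coe_mul_coe (a b : A) : ((a * b : A) : 𝓜(ℂ, A)) = a * b :=
  map_mul (coeHom (𝕜 := ℂ) (A := A)) a b

theorem coe_sum {ι : Type*} (s : Finset ι) (f : ι → A) :
    ((∑ i ∈ s, f i : A) : 𝓜(ℂ, A)) = ∑ i ∈ s, (f i : 𝓜(ℂ, A)) :=
  map_sum (coeHom (𝕜 := ℂ) (A := A)) f s

theorem norm_coe (a : A) : ‖(a : 𝓜(ℂ, A))‖ = ‖a‖ := by
  rw [← norm_fst, coe_fst, ContinuousLinearMap.opNorm_mul_apply]

theorem isometry_coe : Isometry ((↑) : A → 𝓜(ℂ, A)) :=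
  AddMonoidHomClass.isometry_of_norm (coeHom (𝕜 := ℂ) (A := A)) norm_coe

theorem isClosed_range_coeHom :
    IsClosed (NonUnitalStarAlgHom.range (coeHom (𝕜 := ℂ) (A := A)) : Set 𝓜(ℂ, A)) := by
  rw [NonUnitalStarAlgHom.coe_range]
  exact isometry_coe.isClosedEmbedding.isClosed_range

end DoubleCentralizer

namespace CStarAlgebra

variable {A : Type*} [NonUnitalCStarAlgebra A] [PartialOrder A] [StarOrderedRing A]

theorem mul_self_le_self {b : A} (hb : 0 ≤ b) (hb1 : ‖b‖ ≤ 1) : b * b ≤ b := by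
  set s := CFC.sqrt b
  have hs : s * s = b := CFC.sqrt_mul_sqrt_self b hb
  have hs_star : star s = s := (CFC.sqrt_nonneg b).isSelfAdjoint.star_eq
  calc b * b = star s * b * s := by
        conv_lhs => rw [← hs]
        rw [hs_star, ← mul_assoc, mul_assoc s s s, hs]
    _ ≤ ‖b‖ • (star s * s) := star_left_conjugate_le_norm_smul
    _ ≤ b := by
      rw [hs_star, hs]
      exact smul_le_of_le_one_left hb hb1

theorem le_of_mul_eq_self {a b : A} (ha : IsSelfAdjoint a) (ha1 : ‖a‖ ≤ 1) (hb : 0 ≤ b)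
    (hb1 : ‖b‖ ≤ 1) (hba : b * a = a) : a ≤ b := by
  have hab : a * b = a := by
    simpa [ha.star_eq, hb.isSelfAdjoint.star_eq] using congr(star $hba)
  calc a = star b * a * b := by rw [hb.isSelfAdjoint.star_eq, hba, hab]
    _ ≤ ‖a‖ • (star b * b) := star_left_conjugate_le_norm_smul
    _ ≤ b * b := by
      rw [hb.isSelfAdjoint.star_eq]
      exact smul_le_of_le_one_left hb.isSelfAdjoint.mul_self_nonneg ha1
    _ ≤ b := mul_self_le_self hb hb1

theorem cfcₙ_sqrt_mul_self {a : A} (ha : 0 ≤ a) :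
    cfcₙ Real.sqrt a * cfcₙ Real.sqrt a = a := by
  rw [← CFC.sqrt_eq_real_sqrt a ha, CFC.sqrt_mul_sqrt_self a ha]

theorem norm_cfcₙ_sqrt_le_one {a : A} (ha : 0 ≤ a) (ha1 : ‖a‖ ≤ 1) :
    ‖cfcₙ Real.sqrt a‖ ≤ 1 := by
  rw [← CFC.sqrt_eq_real_sqrt a ha, CFC.norm_sqrt a ha]
  exact Real.sqrt_le_one.2 ha1

end CStarAlgebra

section StrictTopology

open DoubleCentralizer

variable {A ι : Type*} [NonUnitalCStarAlgebra A] {l : Filter ι} {f g : ι → 𝓜(ℂ, A)}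
  {x y : 𝓜(ℂ, A)}

variable (l) in
def TendstoStrictly (f : ι → 𝓜(ℂ, A)) (x : 𝓜(ℂ, A)) : Prop :=
  ∀ a : A, Tendsto (fun i => f i * (a : 𝓜(ℂ, A))) l (𝓝 (x * a)) ∧
    Tendsto (fun i => (a : 𝓜(ℂ, A)) * f i) l (𝓝 (a * x))

theorem Filter.Tendsto.tendstoStrictly (h : Tendsto f l (𝓝 x)) : TendstoStrictly l f x :=
  fun _ => ⟨h.mul_const _, h.const_mul _⟩

theorem TendstoStrictly.congr' (h : TendstoStrictly l f x) (hfg : f =ᶠ[l] g) :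
    TendstoStrictly l g x := fun a =>
  ⟨(h a).1.congr' (hfg.mono fun _ hi => by rw [hi]),
    (h a).2.congr' (hfg.mono fun _ hi => by rw [hi])⟩

theorem TendstoStrictly.sub (hf : TendstoStrictly l f x) (hg : TendstoStrictly l g y) :
    TendstoStrictly l (fun i => f i - g i) (x - y) := fun a =>
  ⟨by simpa only [sub_mul] using (hf a).1.sub (hg a).1,
    by simpa only [mul_sub] using (hf a).2.sub (hg a).2⟩

theorem TendstoStrictly.const_mul (hf : TendstoStrictly l f x) (m : 𝓜(ℂ, A)) :
    TendstoStrictly l (fun i => m * f i) (m * x) := fun a =>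
  ⟨by simpa only [mul_assoc] using (hf a).1.const_mul m,
    by simpa only [← mul_assoc, DoubleCentralizer.coe_mul] using (hf (m.snd a)).2⟩

theorem tendstoStrictly_coe_one {u : ι → A} (hu : ∀ i, IsSelfAdjoint (u i))
    (h : ∀ a : A, Tendsto (fun i => u i * a) l (𝓝 a)) :
    TendstoStrictly l (fun i => (u i : 𝓜(ℂ, A))) 1 := by
  have hright (a : A) : Tendsto (fun i => a * u i) l (𝓝 a) := by
    simpa [Function.comp_def, (hu _).star_eq] using (continuous_star.tendsto _).comp (h (star a))
  have hcont : Continuous ((↑) : A → 𝓜(ℂ, A)) := isometry_coe.continuous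
  refine fun a => ⟨?_, ?_⟩ <;> simp only [one_mul, mul_one, ← DoubleCentralizer.coe_mul_coe]
  exacts [(hcont.tendsto _).comp (h a), (hcont.tendsto _).comp (hright a)]

theorem TendstoStrictly.sum_Icc {t : ℕ → 𝓜(ℂ, A)} {L : 𝓜(ℂ, A)}
    (h : TendstoStrictly atTop (fun k => ∑ l ∈ range (k + 1), t l) L) (n : ℕ) :
    TendstoStrictly atTop (fun k => ∑ l ∈ Icc n k, t l) (L - ∑ l ∈ range n, t l) := by
  refine (h.sub tendsto_const_nhds.tendstoStrictly).congr' ?_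
  filter_upwards [eventually_ge_atTop n] with k hk
  rw [← Ico_add_one_right_eq_Icc, sum_Ico_eq_sub _ (by omega)]

theorem exists_tendstoStrictly_sum_conj {Δ : ℕ → A} (hΔ : ∀ l, ‖Δ l‖ ≤ 1)
    (hunit : TendstoStrictly atTop
      (fun k => ∑ l ∈ range (k + 1), (Δ l : 𝓜(ℂ, A)) * (Δ l : 𝓜(ℂ, A))) 1)
    {m : 𝓜(ℂ, A)} (hsum : Summable fun l => ‖m * (Δ l : 𝓜(ℂ, A)) - (Δ l : 𝓜(ℂ, A)) * m‖) :
    ∃ L, TendstoStrictly atTop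
        (fun k => ∑ l ∈ range (k + 1), (Δ l : 𝓜(ℂ, A)) * m * (Δ l : 𝓜(ℂ, A))) L ∧
      m - L ∈ Set.range ((↑) : A → 𝓜(ℂ, A)) := by
  set c : ℕ → 𝓜(ℂ, A) := fun l =>
    (m * (Δ l : 𝓜(ℂ, A)) - (Δ l : 𝓜(ℂ, A)) * m) * (Δ l : 𝓜(ℂ, A))
  have hc : Summable c := hsum.of_norm_bounded fun l =>
    (norm_mul_le _ _).trans (mul_le_of_le_one_right (norm_nonneg _) ((norm_coe _).trans_le (hΔ l)))
  refine ⟨m - ∑' l, c l, ?_, ?_⟩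
  · have hm : TendstoStrictly atTop
        (fun k => m * ∑ l ∈ range (k + 1), (Δ l : 𝓜(ℂ, A)) * (Δ l : 𝓜(ℂ, A))) m := by
      simpa only [mul_one] using hunit.const_mul m
    have hc_tendsto : Tendsto (fun k => ∑ l ∈ range (k + 1), c l) atTop (𝓝 (∑' l, c l)) :=
      hc.hasSum.tendsto_sum_nat.comp (tendsto_add_atTop_nat 1)
    refine (hm.sub hc_tendsto.tendstoStrictly).congr' (.of_eq (funext fun k => ?_))
    simp only [mul_sum, ← sum_sub_distrib, c]
    exact sum_congr rfl fun l _ => by noncomm_ring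
  · -- each `c l` lies in the ideal `A` of `𝓜(ℂ, A)`, which is closed
    obtain ⟨a, ha⟩ := (NonUnitalStarAlgHom.mem_range _).1 <|
      tsum_mem isClosed_range_coeHom fun l => (NonUnitalStarAlgHom.mem_range _).2
        ⟨_, (mul_coe (m * (Δ l : 𝓜(ℂ, A)) - (Δ l : 𝓜(ℂ, A)) * m) (Δ l)).symm⟩
    exact ⟨a, by simpa using ha⟩

end StrictTopology

theorem stmt15_general (J : Type*) [NonUnitalCStarAlgebra J] [PartialOrder J] [StarOrderedRing J]
    (u : ℕ → J)
    (hpos : ∀ n, 0 ≤ u n) (hcontr : ∀ n, ‖u n‖ ≤ 1)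
    (hunit : ∀ n, u (n + 1) * u n = u n)
    (happrox : ∀ a : J, Tendsto (fun n => u n * a) atTop (nhds a))
    (Δ : ℕ → J)
    (hΔ0 : Δ 0 = cfcₙ Real.sqrt (u 0))
    (hΔ : ∀ n, Δ (n + 1) = cfcₙ Real.sqrt (u (n + 1) - u n))
    (m : 𝓜(ℂ, J))
    (hsum : Summable fun l =>
      ‖m * ((Δ l : J) : 𝓜(ℂ, J)) - ((Δ l : J) : 𝓜(ℂ, J)) * m‖) :
    ∃ T : ℕ → 𝓜(ℂ, J),
      (∀ n, ∀ e : J,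
        Tendsto (fun k => (∑ l ∈ Finset.Icc n k,
            ((Δ l : J) : 𝓜(ℂ, J)) * m * ((Δ l : J) : 𝓜(ℂ, J))) * ((e : J) : 𝓜(ℂ, J)))
          atTop (nhds (T n * ((e : J) : 𝓜(ℂ, J)))) ∧
        Tendsto (fun k => ((e : J) : 𝓜(ℂ, J)) * ∑ l ∈ Finset.Icc n k,
            ((Δ l : J) : 𝓜(ℂ, J)) * m * ((Δ l : J) : 𝓜(ℂ, J)))
          atTop (nhds (((e : J) : 𝓜(ℂ, J)) * T n))) ∧
      m - T 0 ∈ Set.range ((↑) : J → 𝓜(ℂ, J)) := by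
  have hinc (n : ℕ) : 0 ≤ u (n + 1) - u n := sub_nonneg.2 <|
    CStarAlgebra.le_of_mul_eq_self (hpos n).isSelfAdjoint (hcontr n) (hpos _) (hcontr _) (hunit n)
  have hΔnorm : ∀ l, ‖Δ l‖ ≤ 1
    | 0 => hΔ0 ▸ CStarAlgebra.norm_cfcₙ_sqrt_le_one (hpos 0) (hcontr 0)
    | n + 1 => hΔ n ▸ CStarAlgebra.norm_cfcₙ_sqrt_le_one (hinc n) <|
        (CStarAlgebra.norm_le_norm_of_nonneg_of_le (hinc n) (sub_le_self _ (hpos n))).trans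
          (hcontr _)
  have hsq (k : ℕ) : ∑ l ∈ range (k + 1), Δ l * Δ l = u k := by
    induction k with
    | zero => simp [hΔ0, CStarAlgebra.cfcₙ_sqrt_mul_self (hpos 0)]
    | succ k ih =>
      rw [sum_range_succ, ih, hΔ, CStarAlgebra.cfcₙ_sqrt_mul_self (hinc k), add_sub_cancel]
  have hsq_strict : TendstoStrictly atTop
      (fun k => ∑ l ∈ range (k + 1), ((Δ l : J) : 𝓜(ℂ, J)) * ((Δ l : J) : 𝓜(ℂ, J))) 1 := by
    simpa only [← DoubleCentralizer.coe_mul_coe, ← DoubleCentralizer.coe_sum, hsq] using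
      tendstoStrictly_coe_one (fun n => (hpos n).isSelfAdjoint) happrox
  obtain ⟨L, hL, hmL⟩ := exists_tendstoStrictly_sum_conj hΔnorm hsq_strict hsum
  refine ⟨fun n => L - ∑ l ∈ range n, ((Δ l : J) : 𝓜(ℂ, J)) * m * ((Δ l : J) : 𝓜(ℂ, J)),
    fun n => hL.sum_Icc n, ?_⟩
  simpa using hmL

/-- let `J` be a C*-algebra with a countable approximate unit `(u_n)`
of positive contractions with `u_{n+1}u_n = u_n`, set `Δ₀ = √u₀`,
`Δ_n = √(u_n - u_{n-1})`, and let `m ∈ M(J)` be a contraction with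
`∑_l ‖mΔ_l - Δ_l m‖ < ∞`.  Then for each `n` the series `∑_{l≥n} Δ_l m Δ_l` converges
strictly in `M(J)` to an element `φ_n(m)`, and `m - φ₀(m)` lies in (the canonical image
of) `J`, i.e. `q_J(φ₀(m)) = q_J(m)` in the corona algebra. -/
theorem stmt15 (J : Type*) [NonUnitalCStarAlgebra J] [PartialOrder J] [StarOrderedRing J]
    (u : ℕ → J)
    (hpos : ∀ n, 0 ≤ u n) (hcontr : ∀ n, ‖u n‖ ≤ 1)
    (hunit : ∀ n, u (n + 1) * u n = u n)
    (happrox : ∀ a : J, Tendsto (fun n => u n * a) atTop (nhds a))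
    (Δ : ℕ → J)
    (hΔ0 : Δ 0 = cfcₙ Real.sqrt (u 0))
    (hΔ : ∀ n, Δ (n + 1) = cfcₙ Real.sqrt (u (n + 1) - u n))
    (m : 𝓜(ℂ, J)) (hm : ‖m‖ ≤ 1)
    (hsum : Summable fun l =>
      ‖m * ((Δ l : J) : 𝓜(ℂ, J)) - ((Δ l : J) : 𝓜(ℂ, J)) * m‖) :
    ∃ T : ℕ → 𝓜(ℂ, J),
      (∀ n, ∀ e : J,
        Tendsto (fun k => (∑ l ∈ Finset.Icc n k,
            ((Δ l : J) : 𝓜(ℂ, J)) * m * ((Δ l : J) : 𝓜(ℂ, J))) * ((e : J) : 𝓜(ℂ, J)))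
          atTop (nhds (T n * ((e : J) : 𝓜(ℂ, J)))) ∧
        Tendsto (fun k => ((e : J) : 𝓜(ℂ, J)) * ∑ l ∈ Finset.Icc n k,
            ((Δ l : J) : 𝓜(ℂ, J)) * m * ((Δ l : J) : 𝓜(ℂ, J)))
          atTop (nhds (((e : J) : 𝓜(ℂ, J)) * T n))) ∧
      m - T 0 ∈ Set.range ((↑) : J → 𝓜(ℂ, J)) :=
  stmt15_general J u hpos hcontr hunit happrox Δ hΔ0 hΔ m hsum
end
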